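/- Let N = 2^e with e ≥ 1, let m be an integer with 5m ≡ 1 (mod N), and set S = L²⁰·R^m·L⁻⁴·R⁻¹ in SL(2,ℤ). Then the element (S·R⁵·L·R⁻¹·L)³·((L·R⁻¹·L)²)⁻¹ lies in Γ(N). -/

import Mathlib

/-! `L R⁻¹ L` is the matrix `[[0,-1],[1,0]]`, whose square is `-1`, so the element in question is
`-X³` with `X = S R⁵ L R⁻¹ L`. Multiplying out, `tr X = 65m - 12 = 13(5m - 1) + 1`, which is `1`
modulo `2^e`. By Cayley–Hamilton an element of `SL(2)` of trace `1` satisfies `X² = X - 1`, hence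
`X³ = -1`, and so `-X³` reduces to the identity modulo `2^e`. -/

open Matrix CongruenceSubgroup

local notation "SL2Z" => Matrix.SpecialLinearGroup (Fin 2) ℤ

/-- The matrix `L = [[1,0],[1,1]]` as an element of `SL(2, ℤ)`. -/
def L : SL2Z := ⟨!![1, 0; 1, 1], by norm_num [Matrix.det_fin_two_of]⟩

/-- The matrix `R = [[1,1],[0,1]]` as an element of `SL(2, ℤ)`. -/
def R : SL2Z := ⟨!![1, 1; 0, 1], by norm_num [Matrix.det_fin_two_of]⟩

open scoped MatrixGroups

theorem Matrix.SpecialLinearGroup.pow_three_eq_neg_one_of_trace_eq_one {A : Type*} [CommRing A]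
    (g : SL(2, A)) (htr : (g : Matrix (Fin 2) (Fin 2) A).trace = 1) : g ^ 3 = -1 := by
  have hdet := g.det_coe
  rw [Matrix.det_fin_two] at hdet
  rw [Matrix.trace_fin_two] at htr
  have hsq : (g : Matrix (Fin 2) (Fin 2) A) * g = g - 1 := by
    ext i j
    fin_cases i <;> fin_cases j <;> simp [Matrix.mul_apply, Fin.sum_univ_two]
    · linear_combination g 0 0 * htr - hdet
    · linear_combination g 0 1 * htr
    · linear_combination g 1 0 * htr
    · linear_combination g 1 1 * htr - hdet
  ext1
  rw [pow_three, coe_mul, coe_mul, ← Matrix.mul_assoc, hsq, Matrix.sub_mul, hsq, coe_neg, coe_one,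
    Matrix.one_mul, sub_sub_cancel_left]

theorem CongruenceSubgroup.neg_pow_three_mem_Gamma_of_trace {N : ℕ} (g : SL(2, ℤ))
    (htr : ((g : Matrix (Fin 2) (Fin 2) ℤ).trace : ZMod N) = 1) : -g ^ 3 ∈ Gamma N := by
  rw [Gamma_mem', SpecialLinearGroup.coe_int_neg, map_pow,
    SpecialLinearGroup.pow_three_eq_neg_one_of_trace_eq_one, neg_neg]
  rwa [SpecialLinearGroup.map_apply_coe, RingHom.mapMatrix_apply, ← AddMonoidHom.map_trace]

theorem ModularGroup.S_sq : S ^ 2 = -1 := by decide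

theorem L_eq_S_mul_T_inv_mul_S_inv : L = ModularGroup.S * ModularGroup.T⁻¹ * ModularGroup.S⁻¹ := by
  decide

theorem L_mul_R_inv_mul_L : L * R⁻¹ * L = ModularGroup.S := by decide

theorem coe_L_zpow (n : ℤ) : ((L ^ n : SL2Z) : Matrix (Fin 2) (Fin 2) ℤ) = !![1, 0; n, 1] := by
  rw [L_eq_S_mul_T_inv_mul_S_inv, conj_zpow, _root_.inv_zpow', Matrix.SpecialLinearGroup.coe_mul,
    Matrix.SpecialLinearGroup.coe_mul, ModularGroup.coe_T_zpow, ModularGroup.S_inv,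
    Matrix.SpecialLinearGroup.coe_neg, ModularGroup.coe_S]
  ext i j
  fin_cases i <;> fin_cases j <;> simp [Matrix.mul_apply, Fin.sum_univ_two]

theorem coe_R_zpow (n : ℤ) : ((R ^ n : SL2Z) : Matrix (Fin 2) (Fin 2) ℤ) = !![1, n; 0, 1] :=
  ModularGroup.coe_T_zpow n

theorem trace_L_pow_mul_R_zpow_mul (m : ℤ) :
    ((L ^ 20 * R ^ m * L ^ (-4 : ℤ) * R⁻¹ * R ^ 5 * L * R⁻¹ * L : SL2Z) :
      Matrix (Fin 2) (Fin 2) ℤ).trace = 13 * (5 * m - 1) + 1 := by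
  have hL : (L : Matrix (Fin 2) (Fin 2) ℤ) = !![1, 0; 1, 1] := rfl
  rw [← zpow_natCast L 20, ← zpow_natCast R 5, ← zpow_neg_one R]
  simp only [Matrix.SpecialLinearGroup.coe_mul, coe_L_zpow, coe_R_zpow, hL, Matrix.trace_fin_two,
    Matrix.mul_fin_two, of_apply, cons_val', cons_val_zero, cons_val_one, cons_val_fin_one,
    Nat.cast_ofNat]
  ring

theorem stmt_3_general (e : ℕ) (m : ℤ)
    (hm : 5 * m ≡ 1 [ZMOD ((2 : ℤ) ^ e)])
    (S : SL2Z) (hS : S = L ^ 20 * R ^ m * L ^ (-4 : ℤ) * R⁻¹) :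
    (S * R ^ 5 * L * R⁻¹ * L) ^ 3 * ((L * R⁻¹ * L) ^ 2)⁻¹ ∈ Gamma (2 ^ e) := by
  have h5m : ((5 * m : ℤ) : ZMod (2 ^ e)) = 1 := by
    rw [← Int.cast_one, ZMod.intCast_eq_intCast_iff]
    exact_mod_cast hm
  rw [L_mul_R_inv_mul_L, ModularGroup.S_sq, inv_neg, inv_one, mul_neg_one]
  apply neg_pow_three_mem_Gamma_of_trace
  rw [hS, trace_L_pow_mul_R_zpow_mul]
  push_cast at h5m ⊢
  linear_combination 13 * h5m

theorem stmt_3 (e : ℕ) (he : 1 ≤ e) (m : ℤ)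
    (hm : 5 * m ≡ 1 [ZMOD ((2 : ℤ) ^ e)])
    (S : SL2Z) (hS : S = L ^ 20 * R ^ m * L ^ (-4 : ℤ) * R⁻¹) :
    (S * R ^ 5 * L * R⁻¹ * L) ^ 3 * ((L * R⁻¹ * L) ^ 2)⁻¹ ∈ Gamma (2 ^ e) :=
  stmt_3_general e m hm S hS
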